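/- arXiv:2009.00161 — 2 statements merged into one kernel-verified Lean document; each statement's English description precedes it below -/
import Mathlib

section
/- Let n ≥ 2, a_i > 0, b ∈ ℝⁿ, and define λ*(b) = (Σ_j b_j/(2a_j))/(Σ_j 1/(2a_j)) and P_i(b) = (λ*(b) - b_i)/(2a_i). Then for any fixed index i, the function b_i ↦ P_i(b) (with all other b_j fixed) is strictly decreasing, and for every j ≠ i the function b_i ↦ P_j(b) is strictly increasing. -/
/-!
Changing `b i` by `δ` moves the clearing price by `w i * δ`, where `w i = (1/(2 a i)) / ∑ⱼ 1/(2 a j)`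
is the share of prosumer `i` in the total weight. Since `0 < w i < 1` as soon as there are two
prosumers, the power of prosumer `i` changes by `(w i - 1) * δ / (2 a i)`, of sign opposite to `δ`,
and that of any other prosumer `j` by `w i * δ / (2 a j)`, of the sign of `δ`.
-/

noncomputable def clearingPrice (n : ℕ) (a b : Fin n → ℝ) : ℝ :=
  (∑ j, b j / (2 * a j)) / (∑ j, 1 / (2 * a j))

noncomputable def optPower (n : ℕ) (a b : Fin n → ℝ) (i : Fin n) : ℝ :=
  (clearingPrice n a b - b i) / (2 * a i)

theorem Finset.single_lt_sum_univ {ι M : Type*} [Fintype ι] [Nontrivial ι]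
    [AddCommMonoid M] [PartialOrder M] [IsOrderedCancelAddMonoid M]
    {f : ι → M} (hf : ∀ j, 0 < f j) (i : ι) : f i < ∑ j, f j := by
  obtain ⟨k, hk⟩ := exists_ne i
  exact Finset.single_lt_sum hk (mem_univ i) (mem_univ k) (hf k) fun j _ _ => (hf j).le

namespace ClearingPrice

variable {n : ℕ} {a : Fin n → ℝ}

noncomputable def priceWeight (n : ℕ) (a : Fin n → ℝ) (i : Fin n) : ℝ :=
  (1 / (2 * a i)) / ∑ j, 1 / (2 * a j)

lemma one_div_two_mul_pos (ha : ∀ j, 0 < a j) (j : Fin n) : 0 < 1 / (2 * a j) := by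
  have := ha j
  positivity

lemma sum_one_div_two_mul_pos (ha : ∀ j, 0 < a j) (i : Fin n) : 0 < ∑ j, 1 / (2 * a j) :=
  Finset.sum_pos (fun j _ => one_div_two_mul_pos ha j) ⟨i, Finset.mem_univ i⟩

lemma priceWeight_pos (ha : ∀ j, 0 < a j) (i : Fin n) : 0 < priceWeight n a i :=
  div_pos (one_div_two_mul_pos ha i) (sum_one_div_two_mul_pos ha i)

lemma priceWeight_lt_one [Nontrivial (Fin n)] (ha : ∀ j, 0 < a j) (i : Fin n) :
    priceWeight n a i < 1 :=
  (div_lt_one (sum_one_div_two_mul_pos ha i)).2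
    (Finset.single_lt_sum_univ (one_div_two_mul_pos ha) i)

lemma clearingPrice_sub_of_eq_off {b b' : Fin n → ℝ} {i : Fin n}
    (hfix : ∀ j, j ≠ i → b' j = b j) :
    clearingPrice n a b' - clearingPrice n a b = priceWeight n a i * (b' i - b i) := by
  have hsum : ∑ j, (b' j / (2 * a j) - b j / (2 * a j)) = (b' i - b i) / (2 * a i) := by
    rw [Finset.sum_eq_single_of_mem i (Finset.mem_univ i) fun j _ hj => by rw [hfix j hj, sub_self]]
    ring
  rw [clearingPrice, clearingPrice, ← sub_div, ← Finset.sum_sub_distrib, hsum, priceWeight]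
  ring

lemma optPower_sub_self {b b' : Fin n → ℝ} {i : Fin n} (hfix : ∀ j, j ≠ i → b' j = b j) :
    optPower n a b' i - optPower n a b i = (priceWeight n a i - 1) * (b' i - b i) / (2 * a i) := by
  have hprice := clearingPrice_sub_of_eq_off (a := a) hfix
  simp only [optPower]
  linear_combination hprice / (2 * a i)

lemma optPower_sub_of_ne {b b' : Fin n → ℝ} {i j : Fin n} (hfix : ∀ j, j ≠ i → b' j = b j)
    (hj : j ≠ i) :
    optPower n a b' j - optPower n a b j = priceWeight n a i * (b' i - b i) / (2 * a j) := by
  have hprice := clearingPrice_sub_of_eq_off (a := a) hfix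
  simp only [optPower, hfix j hj]
  linear_combination hprice / (2 * a j)

end ClearingPrice

open ClearingPrice in
theorem power_monotone_in_b (n : ℕ) (hn : 2 ≤ n) (a : Fin n → ℝ)
    (ha : ∀ i, 0 < a i) (i : Fin n) (b b' : Fin n → ℝ)
    (hlt : b' i < b i) (hfix : ∀ j, j ≠ i → b' j = b j) :
    optPower n a b i < optPower n a b' i ∧
    ∀ j, j ≠ i → optPower n a b' j < optPower n a b j := by
  have : Nontrivial (Fin n) := Fin.nontrivial_iff_two_le.mpr hn
  have hw0 := priceWeight_pos ha i
  have hw1 := priceWeight_lt_one ha i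
  have hδ : b' i - b i < 0 := sub_neg.2 hlt
  constructor
  · rw [← sub_pos, optPower_sub_self hfix]
    exact div_pos (mul_pos_of_neg_of_neg (by linarith) hδ) (by linarith [ha i])
  · intro j hj
    rw [← sub_neg, optPower_sub_of_ne hfix hj]
    exact div_neg_of_neg_of_pos (mul_neg_of_pos_of_neg hw0 hδ) (by linarith [ha j])
end

section
/- Suppose the P2P market without trade weights (d_{ij} = 0) has its set S of successfully traded peers partitioned into connected components S_1,…,S_K of the communication graph restricted to S, with K ≥ 2. If (P_{ij}, λ_{ij}) satisfy the KKT conditions 2a_i P_{i,tr} + b_i = λ_{ij} = λ_{ji} and P_{ij} = -P_{ji} on every edge within S, then within each component S_k all transaction prices equal a common value λ*_k = (Σ_{j∈S_k} b_j/(2a_j))/(Σ_{j∈S_k} 1/(2a_j)), Σ_{i∈S_k} P_{i,tr} = 0, and P_{i,tr} = (λ*_k - b_i)/(2a_i) for i ∈ S_k. -/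
/-!
Stationarity on an edge `ij` says `λᵢⱼ = 2aᵢPᵢ,tr + bᵢ`, and `λᵢⱼ = λⱼᵢ` then forces the
marginal cost `μᵢ = 2aᵢPᵢ,tr + bᵢ` to agree at both ends of every edge, hence to be constant on
each connected component. Bilateral balance `Pᵢⱼ = -Pⱼᵢ` makes the traded powers of a component
cancel, since a component is closed under adjacency. Substituting `Pᵢ,tr = (μ - bᵢ)/(2aᵢ)` into
that balance identifies the common value `μ` as the stated weighted average.
-/

theorem Finset.sum_sum_eq_zero_of_antisymm {ι M : Type*} [AddCommGroup M] [IsAddTorsionFree M]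
    (s : Finset ι) {f : ι → ι → M} (hf : ∀ i j, f i j = -f j i) :
    ∑ i ∈ s, ∑ j ∈ s, f i j = 0 := by
  have hneg : ∑ i ∈ s, ∑ j ∈ s, f i j = -∑ i ∈ s, ∑ j ∈ s, f i j :=
    calc ∑ i ∈ s, ∑ j ∈ s, f i j = ∑ j ∈ s, ∑ i ∈ s, -f j i := by
          rw [Finset.sum_comm]; simp only [← hf]
      _ = -∑ j ∈ s, ∑ i ∈ s, f j i := by simp only [Finset.sum_neg_distrib]
  rw [← two_nsmul_eq_zero, two_nsmul]
  exact add_eq_zero_iff_eq_neg.mpr hneg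

theorem Finset.eq_div_of_sum_sub_div_eq_zero {ι K : Type*} [Field K] {s : Finset ι} {μ : K}
    {b d : ι → K} (h : ∑ i ∈ s, (μ - b i) / d i = 0) (hd : ∑ i ∈ s, 1 / d i ≠ 0) :
    μ = (∑ i ∈ s, b i / d i) / ∑ i ∈ s, 1 / d i := by
  rw [eq_div_iff hd, Finset.mul_sum]
  simp only [sub_div, Finset.sum_sub_distrib, sub_eq_zero] at h
  simpa only [mul_one_div] using h

namespace SimpleGraph

variable {V : Type*} {G : SimpleGraph V}

theorem Reachable.apply_eq_of_forall_adj {α : Type*} {f : V → α}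
    (hf : ∀ u v, G.Adj u v → f u = f v) {u v : V} (h : G.Reachable u v) : f u = f v := by
  obtain ⟨w⟩ := h
  induction w with
  | nil => rfl
  | cons hadj _ ih => exact (hf _ _ hadj).trans ih

theorem sum_sum_neighborFinset_eq_zero_of_antisymm {M : Type*} [AddCommGroup M]
    [IsAddTorsionFree M] [Fintype V] [DecidableRel G.Adj] {s : Finset V}
    (hs : ∀ u ∈ s, ∀ v, G.Adj u v → v ∈ s) {P : V → V → M}
    (hP : ∀ u v, G.Adj u v → P u v = -P v u) :
    ∑ u ∈ s, ∑ v ∈ G.neighborFinset u, P u v = 0 := by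
  have hlocal : ∀ u ∈ s, ∑ v ∈ G.neighborFinset u, P u v
      = ∑ v ∈ s, if G.Adj u v then P u v else 0 := fun u hu => by
    rw [← Finset.sum_filter]
    congr 1
    ext v
    simpa using hs u hu v
  rw [Finset.sum_congr rfl hlocal]
  refine s.sum_sum_eq_zero_of_antisymm fun u v => ?_
  by_cases huv : G.Adj u v
  · simp [huv, huv.symm, hP u v huv]
  · simp [huv, G.adj_comm v u]

end SimpleGraph

open SimpleGraph

theorem clustered_p2p_market_general (n : ℕ) (G : SimpleGraph (Fin n))
    [DecidableRel G.Adj] [DecidableEq G.ConnectedComponent]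
    (a b : Fin n → ℝ) (ha : ∀ i, 0 < a i)
    (Ptr : Fin n → ℝ) (P lam : Fin n → Fin n → ℝ)
    (hPtr : ∀ i, Ptr i = ∑ j ∈ G.neighborFinset i, P i j)
    (hKKT : ∀ i j, G.Adj i j → lam i j = 2 * a i * Ptr i + b i)
    (hsym : ∀ i j, G.Adj i j → lam i j = lam j i)
    (hanti : ∀ i j, G.Adj i j → P i j = -P j i) :
    ∀ c : G.ConnectedComponent,
      let Sk : Finset (Fin n) := Finset.univ.filter fun i => G.connectedComponentMk i = c
      let lamk : ℝ := (∑ j ∈ Sk, b j / (2 * a j)) / (∑ j ∈ Sk, 1 / (2 * a j))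
      (∀ i j, G.Adj i j → G.connectedComponentMk i = c → lam i j = lamk) ∧
      (∑ i ∈ Sk, Ptr i) = 0 ∧
      ∀ i, G.connectedComponentMk i = c → Ptr i = (lamk - b i) / (2 * a i) := by
  intro c Sk lamk
  set μ : Fin n → ℝ := fun i => 2 * a i * Ptr i + b i
  have hmem : ∀ i, i ∈ Sk ↔ G.connectedComponentMk i = c := by simp [Sk]
  obtain ⟨r, hr⟩ := c.exists_rep
  have hμ_const : ∀ i ∈ Sk, μ i = μ r := fun i hi =>
    Reachable.apply_eq_of_forall_adj
      (fun u v huv => (hKKT u v huv).symm.trans ((hsym u v huv).trans (hKKT v u huv.symm)))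
      (ConnectedComponent.exact (((hmem i).1 hi).trans hr.symm))
  have hPtr_μ : ∀ i, Ptr i = (μ i - b i) / (2 * a i) := fun i => by
    field_simp [(ha i).ne']
    ring
  have hclosed : ∀ u ∈ Sk, ∀ v, G.Adj u v → v ∈ Sk := fun u hu v huv =>
    (hmem v).2 ((ConnectedComponent.connectedComponentMk_eq_of_adj huv).symm.trans ((hmem u).1 hu))
  have hbalance : ∑ i ∈ Sk, Ptr i = 0 := by
    simp only [hPtr]
    exact sum_sum_neighborFinset_eq_zero_of_antisymm hclosed hanti
  have hweights : 0 < ∑ j ∈ Sk, 1 / (2 * a j) :=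
    Finset.sum_pos (fun j _ => by have := ha j; positivity) ⟨r, (hmem r).2 hr⟩
  have hμr : μ r = lamk := by
    refine Finset.eq_div_of_sum_sub_div_eq_zero ?_ hweights.ne'
    rw [← hbalance]
    exact Finset.sum_congr rfl fun j hj => by rw [hPtr_μ j, hμ_const j hj]
  have hμ_comp : ∀ i, G.connectedComponentMk i = c → μ i = lamk := fun i hi =>
    (hμ_const i ((hmem i).2 hi)).trans hμr
  exact ⟨fun i j hij hi => (hKKT i j hij).trans (hμ_comp i hi), hbalance,
    fun i hi => by rw [hPtr_μ i, hμ_comp i hi]⟩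

theorem clustered_p2p_market (n : ℕ) (G : SimpleGraph (Fin n))
    [DecidableRel G.Adj] [DecidableEq G.ConnectedComponent]
    (hK : 2 ≤ Fintype.card G.ConnectedComponent)
    (a b : Fin n → ℝ) (ha : ∀ i, 0 < a i)
    (Ptr : Fin n → ℝ) (P lam : Fin n → Fin n → ℝ)
    (hdeg : ∀ i, 0 < G.degree i)
    (hPtr : ∀ i, Ptr i = ∑ j ∈ G.neighborFinset i, P i j)
    (hKKT : ∀ i j, G.Adj i j → lam i j = 2 * a i * Ptr i + b i)
    (hsym : ∀ i j, G.Adj i j → lam i j = lam j i)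
    (hanti : ∀ i j, G.Adj i j → P i j = -P j i) :
    ∀ c : G.ConnectedComponent,
      let Sk : Finset (Fin n) := Finset.univ.filter fun i => G.connectedComponentMk i = c
      let lamk : ℝ := (∑ j ∈ Sk, b j / (2 * a j)) / (∑ j ∈ Sk, 1 / (2 * a j))
      (∀ i j, G.Adj i j → G.connectedComponentMk i = c → lam i j = lamk) ∧
      (∑ i ∈ Sk, Ptr i) = 0 ∧
      ∀ i, G.connectedComponentMk i = c → Ptr i = (lamk - b i) / (2 * a i) :=
  clustered_p2p_market_general n G a b ha Ptr P lam hPtr hKKT hsym hanti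
end
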